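/- Let $A$ be a connected union of triangles (a triangle collection) on $v\ge 5$ vertices with minimum degree $\delta(A)\ge 3$ and $e(A) = 2v-2$ edges, containing a spanning $(v-2)$-bunch $B$ of triangles with $e(B)=2v-3$. Then $A$ is the wheel $W_{v-1}$ (a cycle on $v-1$ vertices plus a hub adjacent to all of them). -/

import Mathlib

open scoped Classical

/-- The union graph of a family of cliques. -/
def cliquesGraph {α : Type*} {s : ℕ} (F : Fin s → Finset α) : SimpleGraph α where
  Adj u v := u ≠ v ∧ ∃ i, u ∈ F i ∧ v ∈ F i
  symm := by
    refine ⟨?_⟩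
    rintro u v ⟨h, i, h1, h2⟩
    exact ⟨h.symm, i, h2, h1⟩
  loopless := by
    refine ⟨?_⟩
    rintro u ⟨h, -⟩
    exact h rfl

/-- `F` is an `s`-bunch of `k`-cliques. -/
def IsBunch {α : Type*} [DecidableEq α] (k : ℕ) {s : ℕ} (F : Fin s → Finset α) : Prop :=
  (∀ i, (F i).card = k) ∧
  ∀ i : Fin s, 0 < (i : ℕ) →
    ¬ F i ⊆ (Finset.Iio i).biUnion F ∧ 2 ≤ (F i ∩ (Finset.Iio i).biUnion F).card

/-- The auxiliary graph of a family of cliques: two (indices of) cliques are adjacent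
iff they are distinct and share at least two vertices. -/
def auxGraph {α : Type*} [DecidableEq α] {m : ℕ} (G : Fin m → Finset α) :
    SimpleGraph (Fin m) where
  Adj i j := i ≠ j ∧ 2 ≤ (G i ∩ G j).card
  symm := by
    refine ⟨?_⟩
    rintro i j ⟨h1, h2⟩
    exact ⟨h1.symm, by rwa [Finset.inter_comm]⟩
  loopless := by
    refine ⟨?_⟩
    rintro i ⟨h, -⟩
    exact h rfl

/-- The wheel graph `W_n`: a cycle on the `n` vertices `some i` together with a hub
`none` adjacent to all cycle vertices. -/
def wheel (n : ℕ) : SimpleGraph (Option (Fin n)) where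
  Adj u v := u ≠ v ∧ (u = none ∨ v = none ∨
    ∃ i j : Fin n, u = some i ∧ v = some j ∧
      ((i.val + 1) % n = j.val ∨ (j.val + 1) % n = i.val))
  symm := by
    refine ⟨?_⟩
    rintro u v ⟨h1, h2⟩
    refine ⟨h1.symm, ?_⟩
    rcases h2 with h | h | ⟨i, j, hi, hj, h⟩
    · exact Or.inr (Or.inl h)
    · exact Or.inl h
    · exact Or.inr (Or.inr ⟨j, i, hj, hi, h.symm⟩)
  loopless := by
    refine ⟨?_⟩
    rintro u ⟨h, -⟩
    exact h rfl

/-!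
Each triangle of the bunch after the first adds at least two edges, so `e(B) = 2v - 3` forces
every new triangle to be glued along an edge that is already there. From the second stage on,
the degree-2 vertices of the partial unions are then pairwise non-adjacent and their number never
decreases. Since `A = B + XY` has minimum degree `3`, the only degree-2 vertices of `B` are `X`
and `Y`, so every stage has exactly two of them and each new triangle is glued at one of them.
Following the stages, a vertex adjacent to both degree-2 vertices lies in all triangles so far,
and the remaining vertices form a path between the two degree-2 vertices. The triangle of `A`
through `XY` supplies such a hub `z`. It is adjacent to every other vertex, so the degree sum
forces all other degrees to be `3`, and the path closed up by `XY` is the rim of the wheel.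
-/

open Finset SimpleGraph

lemma Finset.exists_third_of_card_eq_three {V : Type*} [DecidableEq V] {s : Finset V}
    {a b : V} (hs : #s = 3) (ha : a ∈ s) (hb : b ∈ s) (hab : a ≠ b) :
    ∃ c, c ≠ a ∧ c ≠ b ∧ s = {a, b, c} := by
  have hsub : ({a, b} : Finset V) ⊆ s := by simp [insert_subset_iff, ha, hb]
  obtain ⟨c, hc⟩ := card_eq_one.1 (by rw [card_sdiff_of_subset hsub, hs, card_pair hab] :
    #(s \ {a, b}) = 1)
  have hcs : c ∈ s \ {a, b} := by simp [hc]
  simp only [mem_sdiff, mem_insert, mem_singleton, not_or] at hcs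
  refine ⟨c, hcs.2.1, hcs.2.2, ?_⟩
  rw [← union_sdiff_of_subset hsub, hc, insert_union, ← insert_eq]

lemma cliquesGraph_le_of_forall_exists {α : Type*} {s t : ℕ} {F : Fin s → Finset α}
    {T : Fin t → Finset α} (h : ∀ i, ∃ j, F i = T j) : cliquesGraph F ≤ cliquesGraph T := by
  rintro u w ⟨hne, i, hu, hw⟩
  obtain ⟨j, hj⟩ := h i
  exact ⟨hne, j, hj ▸ hu, hj ▸ hw⟩

lemma exists_adj_adj_of_cliquesGraph_eq_sup_edge {α : Type*} [DecidableEq α] {t : ℕ}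
    {T : Fin t → Finset α} (hT3 : ∀ j, #(T j) = 3) {G : SimpleGraph α} {X Y : α}
    (hA : cliquesGraph T = G ⊔ edge X Y) (hXY : X ≠ Y) : ∃ z, G.Adj z X ∧ G.Adj z Y := by
  have hXY' : (cliquesGraph T).Adj X Y := hA ▸ Or.inr ((edge_adj ..).2 ⟨Or.inl ⟨rfl, rfl⟩, hXY⟩)
  obtain ⟨-, j, hX, hY⟩ := hXY'
  obtain ⟨z, hzX, hzY, hj⟩ := Finset.exists_third_of_card_eq_three (hT3 j) hX hY hXY
  have hz : z ∈ T j := by simp [hj]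
  have hadj : ∀ y, y ≠ z → y ∈ T j → G.Adj z y := fun y hy hyj => by
    have : (G ⊔ edge X Y).Adj z y := hA ▸ ⟨hy.symm, j, hz, hyj⟩
    simpa [edge_adj, hzX, hzY] using this
  exact ⟨z, hadj X hzX.symm hX, hadj Y hzY.symm hY⟩

section GraphFacts

variable {V : Type*} [Fintype V]

lemma wheel_adj_some {m : ℕ} (hm : 1 ≤ m) {i j : Fin (m + 1)} :
    (wheel (m + 1)).Adj (some i) (some j) ↔ j = i + 1 ∨ i = j + 1 := by
  have hval : ∀ k : Fin (m + 1), (k.val + 1) % (m + 1) = (k + 1 : Fin (m + 1)).val := by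
    intro k
    rw [Fin.val_add_one]
    split_ifs with h
    · simp [h]
    · exact Nat.mod_eq_of_lt (by have := Fin.val_lt_last h; omega)
  have hne : ∀ k : Fin (m + 1), k + 1 ≠ k := by
    intro k
    rw [Ne, add_eq_left, Fin.one_eq_zero_iff]
    omega
  simp only [wheel, ne_eq, Option.some.injEq, reduceCtorEq, false_or, exists_and_left,
    exists_eq_left', hval, ← Fin.ext_iff]
  constructor
  · exact fun h => h.2.imp Eq.symm Eq.symm
  · rintro (rfl | rfl)
    · exact ⟨(hne i).symm, Or.inl rfl⟩
    · exact ⟨hne j, Or.inr rfl⟩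

lemma Fin.add_one_ne_sub_one {m : ℕ} (hm : 2 ≤ m) (i : Fin (m + 1)) : i + 1 ≠ i - 1 := by
  intro h
  have h2 : i + 1 + 1 = i - 1 + 1 := by rw [h]
  rw [sub_add_cancel, add_assoc, add_eq_left, Fin.ext_iff, Fin.val_add_one] at h2
  split_ifs at h2 with h1
  · rw [Fin.ext_iff, Fin.val_one', Fin.val_last, Nat.mod_eq_of_lt (by omega)] at h1
    omega
  · simp at h2

section Cycle

variable {G : SimpleGraph V} {m : ℕ} {z : V} {g : Fin (m + 1) → V}

lemma neighborFinset_eq_of_cycle (hm : 2 ≤ m) (hg_inj : Function.Injective g)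
    (hg_ne : ∀ i, g i ≠ z) (hg_succ : ∀ i, G.Adj (g i) (g (i + 1)))
    (hhub : ∀ w, w ≠ z → G.Adj z w) (hdeg : ∀ w, w ≠ z → G.degree w = 3) (i : Fin (m + 1)) :
    G.neighborFinset (g i) = {z, g (i + 1), g (i - 1)} := by
  have hsub : ({z, g (i + 1), g (i - 1)} : Finset V) ⊆ G.neighborFinset (g i) := by
    simp only [insert_subset_iff, singleton_subset_iff, mem_neighborFinset]
    exact ⟨(hhub _ (hg_ne i)).symm, hg_succ i, by simpa using (hg_succ (i - 1)).symm⟩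
  have hcard : ({z, g (i + 1), g (i - 1)} : Finset V).card = 3 := by
    rw [card_insert_of_notMem, card_pair (hg_inj.ne (Fin.add_one_ne_sub_one hm i))]
    simp only [mem_insert, mem_singleton, not_or]
    exact ⟨(hg_ne _).symm, (hg_ne _).symm⟩
  refine (eq_of_subset_of_card_le hsub ?_).symm
  rw [hcard, card_neighborFinset_eq_degree, hdeg _ (hg_ne i)]

theorem nonempty_iso_wheel_of_cycle (hm : 2 ≤ m) (hg_inj : Function.Injective g)
    (hg_ne : ∀ i, g i ≠ z) (hg_surj : ∀ w, w ≠ z → ∃ i, g i = w)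
    (hg_succ : ∀ i, G.Adj (g i) (g (i + 1)))
    (hhub : ∀ w, w ≠ z → G.Adj z w) (hdeg : ∀ w, w ≠ z → G.degree w = 3) :
    Nonempty (G ≃g wheel (m + 1)) := by
  let e : Option (Fin (m + 1)) ≃ V := Equiv.ofBijective (fun o => o.elim z g) ⟨by
    rintro (_ | i) (_ | j) h
    · rfl
    · exact absurd h.symm (hg_ne j)
    · exact absurd h (hg_ne i)
    · exact congrArg some (hg_inj h), by
    intro w
    by_cases hw : w = z
    · exact ⟨none, hw.symm⟩
    · obtain ⟨i, hi⟩ := hg_surj w hw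
      exact ⟨some i, hi⟩⟩
  refine ⟨(⟨e, ?_⟩ : wheel (m + 1) ≃g G).symm⟩
  rintro (_ | i) (_ | j)
  · exact ⟨fun h => absurd rfl h.ne, fun h => absurd rfl h.ne⟩
  · exact iff_of_true (hhub _ (hg_ne j)) ⟨by simp, Or.inl rfl⟩
  · exact iff_of_true (hhub _ (hg_ne i)).symm ⟨by simp, Or.inr (Or.inl rfl)⟩
  · show G.Adj (g i) (g j) ↔ _
    rw [← mem_neighborFinset, neighborFinset_eq_of_cycle hm hg_inj hg_ne hg_succ hhub hdeg,
      wheel_adj_some (by omega)]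
    simp [hg_ne j, hg_inj.eq_iff, eq_sub_iff_add_eq, eq_comm]

end Cycle

theorem nonempty_iso_wheel_of_isPath [DecidableEq V] {G : SimpleGraph V} {z p q : V}
    {P : G.Walk p q} (hP : P.IsPath) (hsupp : P.support.toFinset = univ.erase z) (hqp : G.Adj q p)
    (hhub : ∀ w, w ≠ z → G.Adj z w) (hdeg : ∀ w, w ≠ z → G.degree w = 3)
    (hlen : 2 ≤ P.length) : Nonempty (G ≃g wheel (P.length + 1)) := by
  refine nonempty_iso_wheel_of_cycle (g := fun i => P.getVert i) hlen
    (fun i j h => Fin.ext (hP.getVert_injOn (Nat.le_of_lt_succ i.2) (Nat.le_of_lt_succ j.2) h))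
    (fun i h => ?_) (fun w hw => ?_) (fun i => ?_) hhub hdeg
  · have := P.getVert_mem_support i
    rw [← List.mem_toFinset, hsupp, h] at this
    simp at this
  · have : w ∈ P.support.toFinset := by simpa [hsupp] using hw
    obtain ⟨k, hk, hkm⟩ := Walk.mem_support_iff_exists_getVert.1 (List.mem_toFinset.1 this)
    exact ⟨⟨k, Nat.lt_succ_of_le hkm⟩, hk⟩
  · by_cases hi : i = Fin.last P.length
    · subst hi
      simpa using hqp
    · have hi' : (i + 1 : Fin (P.length + 1)).val = i.val + 1 := by simp [Fin.val_add_one, hi]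
      simpa [hi'] using P.adj_getVert_succ (Fin.val_lt_last hi)

lemma exists_eq_sup_edge_of_le {G H : SimpleGraph V} (hGH : G ≤ H)
    (hcard : #H.edgeFinset = #G.edgeFinset + 1) : ∃ X Y, X ≠ Y ∧ H = G ⊔ edge X Y := by
  obtain ⟨e, heH, heG⟩ :=
    exists_mem_notMem_of_card_lt_card (s := G.edgeFinset) (t := H.edgeFinset) (by omega)
  induction e using Sym2.ind with
  | _ X Y =>
  rw [mem_edgeFinset, mem_edgeSet] at heH heG
  refine ⟨X, Y, heH.ne, (edgeFinset_inj.1 (eq_of_subset_of_card_le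
    (edgeFinset_mono (sup_le hGH ((edge_le_iff H).2 (Or.inr heH)))) ?_)).symm⟩
  rw [hcard, card_edgeFinset_sup_edge G heG heH.ne]

lemma degree_eq_three_of_forall_adj {G : SimpleGraph V} {z : V}
    (hhub : ∀ w, w ≠ z → G.Adj z w) (hmin : ∀ w, 3 ≤ G.degree w)
    (hE : #G.edgeFinset = 2 * (Fintype.card V - 1)) (w : V) (hw : w ≠ z) :
    G.degree w = 3 := by
  have hz : G.degree z = Fintype.card V - 1 := by
    rw [← card_neighborFinset_eq_degree, ← card_univ, ← card_erase_of_mem (mem_univ z)]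
    congr 1
    ext u
    simp only [mem_neighborFinset, mem_erase, mem_univ, and_true]
    exact ⟨fun h => h.ne', hhub u⟩
  have hsum := G.sum_degrees_eq_twice_card_edges
  rw [← sum_erase_add _ _ (mem_univ z), hz, hE] at hsum
  have heq : ∑ u ∈ univ.erase z, G.degree u = ∑ u ∈ univ.erase z, 3 := by
    rw [sum_const, card_erase_of_mem (mem_univ z), card_univ, smul_eq_mul]
    have : 1 ≤ Fintype.card V := Fintype.card_pos_iff.2 ⟨z⟩
    omega
  exact ((sum_eq_sum_iff_of_le (fun u _ => hmin u)).1 heq.symm w (by simpa using hw)).symm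

end GraphFacts

namespace TriangleBunch

variable {V : Type*} {n : ℕ} {F : Fin n → Finset V} {k : ℕ} {u w a b x : V}

def stageGraph (F : Fin n → Finset V) (k : ℕ) : SimpleGraph V where
  Adj u w := u ≠ w ∧ ∃ i : Fin n, i.val < k ∧ u ∈ F i ∧ w ∈ F i
  symm := ⟨fun _ _ ⟨h, i, hi, hu, hw⟩ => ⟨h.symm, i, hi, hw, hu⟩⟩
  loopless := ⟨fun _ h => h.1 rfl⟩

lemma stageGraph_adj : (stageGraph F k).Adj u w ↔
    u ≠ w ∧ ∃ i : Fin n, i.val < k ∧ u ∈ F i ∧ w ∈ F i := Iff.rfl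

lemma stageGraph_mono {k l : ℕ} (h : k ≤ l) : stageGraph F k ≤ stageGraph F l :=
  fun _ _ ⟨hne, i, hi, hu, hw⟩ => ⟨hne, i, hi.trans_le h, hu, hw⟩

lemma stageGraph_succ_adj (hk : k < n) : (stageGraph F (k + 1)).Adj u w ↔
    (stageGraph F k).Adj u w ∨ u ≠ w ∧ u ∈ F ⟨k, hk⟩ ∧ w ∈ F ⟨k, hk⟩ := by
  simp only [stageGraph_adj, Nat.lt_succ_iff_lt_or_eq, or_and_right, exists_or, ← and_or_left]
  exact and_congr_right fun _ => or_congr_right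
    ⟨fun ⟨i, hi, hu⟩ => (Fin.ext hi : i = ⟨k, hk⟩) ▸ hu, fun hu => ⟨_, rfl, hu⟩⟩

lemma cliquesGraph_eq_stageGraph : cliquesGraph F = stageGraph F n := by
  ext u w
  exact and_congr_right fun _ => ⟨fun ⟨i, hu, hw⟩ => ⟨i, i.2, hu, hw⟩,
    fun ⟨i, _, hu, hw⟩ => ⟨i, hu, hw⟩⟩

section DegreeBasics

variable [Fintype V]

lemma neighborFinset_stageGraph_succ_of_notMem (hk : k < n) (hw : w ∉ F ⟨k, hk⟩) :
    (stageGraph F (k + 1)).neighborFinset w = (stageGraph F k).neighborFinset w := by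
  ext u
  simp [stageGraph_succ_adj hk, hw]

lemma degree_stageGraph_succ_of_notMem (hk : k < n) (hw : w ∉ F ⟨k, hk⟩) :
    (stageGraph F (k + 1)).degree w = (stageGraph F k).degree w := by
  simp only [← card_neighborFinset_eq_degree, neighborFinset_stageGraph_succ_of_notMem hk hw]

lemma degree_stageGraph_mono {l : ℕ} (h : k ≤ l) :
    (stageGraph F k).degree w ≤ (stageGraph F l).degree w :=
  degree_le_of_le (stageGraph_mono h)

noncomputable def degreeTwoSet (F : Fin n → Finset V) (k : ℕ) : Finset V :=
  {w | (stageGraph F k).degree w = 2}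

lemma mem_degreeTwoSet : w ∈ degreeTwoSet F k ↔ (stageGraph F k).degree w = 2 := by
  simp [degreeTwoSet]

end DegreeBasics

variable [DecidableEq V]

def stageVerts (F : Fin n → Finset V) (k : ℕ) : Finset V :=
  (univ.filter fun i : Fin n => i.val < k).biUnion F

lemma mem_stageVerts : w ∈ stageVerts F k ↔ ∃ i : Fin n, i.val < k ∧ w ∈ F i := by
  simp [stageVerts]

lemma mem_stageVerts_of_adj (h : (stageGraph F k).Adj u w) : u ∈ stageVerts F k :=
  let ⟨_, i, hi, hu, _⟩ := h
  mem_stageVerts.2 ⟨i, hi, hu⟩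

lemma biUnion_Iio_eq_stageVerts (i : Fin n) : (Iio i).biUnion F = stageVerts F i := by
  ext w
  simp only [mem_biUnion, mem_Iio, mem_stageVerts, Fin.lt_def]

lemma stageVerts_succ (hk : k < n) : stageVerts F (k + 1) = stageVerts F k ∪ F ⟨k, hk⟩ := by
  ext w
  simp only [mem_union, mem_stageVerts, Nat.lt_succ_iff_lt_or_eq, or_and_right, exists_or]
  exact or_congr_right ⟨fun ⟨i, hi, hw⟩ => (Fin.ext hi : i = ⟨k, hk⟩) ▸ hw,
    fun hw => ⟨_, rfl, hw⟩⟩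

lemma stageVerts_zero : stageVerts F 0 = ∅ := by
  ext w
  simp [mem_stageVerts]

lemma stageVerts_one (hn : 0 < n) : stageVerts F 1 = F ⟨0, hn⟩ := by
  rw [stageVerts_succ, stageVerts_zero, empty_union]

lemma stageVerts_self [Fintype V] (hspan : univ.biUnion F = univ) : stageVerts F n = univ := by
  rw [← hspan]
  ext w
  simp [mem_stageVerts]

lemma stageGraph_adj_of_forall_mem {z : V} (hz : ∀ i : Fin n, i.val < k → z ∈ F i)
    (hw : w ∈ stageVerts F k) (hne : z ≠ w) : (stageGraph F k).Adj z w := by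
  obtain ⟨i, hi, hwi⟩ := mem_stageVerts.1 hw
  exact ⟨hne, i, hi, hz i hi, hwi⟩

structure IsExtension (F : Fin n → Finset V) (k : ℕ) (a b x : V) : Prop where
  lt : k < n
  eq : F ⟨k, lt⟩ = {a, b, x}
  ne : a ≠ b
  left_mem : a ∈ stageVerts F k
  right_mem : b ∈ stageVerts F k
  new_notMem : x ∉ stageVerts F k

lemma IsExtension.left_ne_new (e : IsExtension F k a b x) : a ≠ x :=
  fun h => e.new_notMem (h ▸ e.left_mem)

lemma IsExtension.right_ne_new (e : IsExtension F k a b x) : b ≠ x :=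
  fun h => e.new_notMem (h ▸ e.right_mem)

lemma IsExtension.swap (e : IsExtension F k a b x) : IsExtension F k b a x :=
  ⟨e.lt, by rw [e.eq, insert_comm], e.ne.symm, e.right_mem, e.left_mem, e.new_notMem⟩

lemma IsExtension.pos (e : IsExtension F k a b x) : 0 < k := by
  obtain ⟨i, hi, -⟩ := mem_stageVerts.1 e.left_mem
  omega

lemma _root_.IsBunch.exists_isExtension (hB : IsBunch 3 F) (hk0 : 0 < k) (hk : k < n) :
    ∃ a b x, IsExtension F k a b x := by
  obtain ⟨hnsub, hcard⟩ := hB.2 ⟨k, hk⟩ hk0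
  rw [biUnion_Iio_eq_stageVerts] at hnsub hcard
  obtain ⟨x, hxF, hxU⟩ := not_subset.1 hnsub
  have hglue : F ⟨k, hk⟩ ∩ stageVerts F k = (F ⟨k, hk⟩).erase x := by
    refine eq_of_subset_of_card_le (fun u hu => ?_) ?_
    · rw [mem_inter] at hu
      exact mem_erase.2 ⟨fun h => hxU (h ▸ hu.2), hu.1⟩
    · rw [card_erase_of_mem hxF, hB.1]
      exact hcard
  obtain ⟨a, b, hab, hpair⟩ := card_eq_two.1
    (by rw [card_erase_of_mem hxF, hB.1] : #((F ⟨k, hk⟩).erase x) = 2)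
  have hmem : ∀ u ∈ ({a, b} : Finset V), u ∈ stageVerts F k :=
    fun u hu => (mem_inter.1 (hglue ▸ hpair ▸ hu)).2
  refine ⟨a, b, x, hk, ?_, hab, hmem a (by simp), hmem b (by simp), hxU⟩
  rw [← insert_erase hxF, hpair]
  ext u
  simp only [mem_insert, mem_singleton]
  tauto

def IsFan (F : Fin n → Finset V) (k : ℕ) (w p q : V) : Prop :=
  (∀ i : Fin n, i.val < k → w ∈ F i) ∧
    ∃ P : (stageGraph F k).Walk p q, P.IsPath ∧ P.support.toFinset = (stageVerts F k).erase w

lemma IsFan.symm {p q : V} (h : IsFan F k w p q) : IsFan F k w q p := by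
  obtain ⟨hw, P, hP, hsupp⟩ := h
  exact ⟨hw, P.reverse, hP.reverse, by rw [Walk.support_reverse, List.toFinset_reverse, hsupp]⟩

lemma IsExtension.isFan_succ {s : V} (e : IsExtension F k a b x) (h : IsFan F k b a s) :
    IsFan F (k + 1) b x s := by
  obtain ⟨hb, P, hP, hsupp⟩ := h
  refine ⟨fun i hi => ?_, ?_⟩
  · rcases Nat.lt_succ_iff_lt_or_eq.1 hi with hi | hi
    · exact hb i hi
    · rw [(Fin.ext hi : i = ⟨k, e.lt⟩), e.eq]
      simp
  have hxa : (stageGraph F (k + 1)).Adj x a :=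
    (stageGraph_succ_adj e.lt).2 (Or.inr ⟨e.left_ne_new.symm, by simp [e.eq], by simp [e.eq]⟩)
  have hxP : x ∉ P.support := fun hx => e.new_notMem
    (mem_of_mem_erase (hsupp ▸ List.mem_toFinset.2 hx))
  refine ⟨Walk.cons hxa (P.mapLe (stageGraph_mono k.le_succ)),
    (hP.mapLe _).cons (by rwa [Walk.support_mapLe_eq_support]), ?_⟩
  rw [Walk.support_cons, Walk.support_mapLe_eq_support, List.toFinset_cons, hsupp,
    stageVerts_succ e.lt, e.eq, union_insert, insert_eq_of_mem (mem_union_left _ e.left_mem),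
    union_insert, insert_eq_of_mem (mem_union_left _ e.right_mem), union_comm, ← insert_eq,
    erase_insert_of_ne e.right_ne_new.symm]

lemma isFan_one {p q : V} (hn : 0 < n) (h3 : #(F ⟨0, hn⟩) = 3) (hpq : p ≠ q)
    (hp : p ∈ F ⟨0, hn⟩) (hq : q ∈ F ⟨0, hn⟩) (hwp : (stageGraph F 1).Adj w p)
    (hwq : (stageGraph F 1).Adj w q) : IsFan F 1 w p q := by
  have hU : stageVerts F 1 = F ⟨0, hn⟩ := stageVerts_one hn
  have hw : w ∈ F ⟨0, hn⟩ := hU ▸ mem_stageVerts_of_adj hwp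
  obtain ⟨c, hcp, hcq, hF⟩ := exists_third_of_card_eq_three h3 hp hq hpq
  obtain rfl : w = c := by
    rw [hF] at hw
    simpa [hwp.ne, hwq.ne] using hw
  refine ⟨fun i hi => (Fin.ext (Nat.lt_one_iff.1 hi) : i = ⟨0, hn⟩) ▸ hw, ?_⟩
  have hpq' : (stageGraph F 1).Adj p q := ⟨hpq, ⟨0, hn⟩, Nat.one_pos, hp, hq⟩
  refine ⟨hpq'.toWalk, hpq'.isPath_toWalk, ?_⟩
  rw [Adj.support_toWalk, hU, hF, erase_insert_of_ne hcp.symm, erase_insert_of_ne hcq.symm,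
    erase_singleton]
  simp

section Degree

variable [Fintype V]

lemma neighborFinset_stageGraph_eq_empty (hw : w ∉ stageVerts F k) :
    (stageGraph F k).neighborFinset w = ∅ :=
  eq_empty_of_forall_notMem fun _ h => hw (mem_stageVerts_of_adj ((mem_neighborFinset ..).1 h))

lemma neighborFinset_stageGraph_subset : (stageGraph F k).neighborFinset w ⊆ stageVerts F k :=
  fun _ h => mem_stageVerts_of_adj ((mem_neighborFinset ..).1 h).symm

lemma neighborFinset_stageGraph_succ_of_mem (hk : k < n) (hw : w ∈ F ⟨k, hk⟩) :
    (stageGraph F (k + 1)).neighborFinset w =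
      (stageGraph F k).neighborFinset w ∪ (F ⟨k, hk⟩).erase w := by
  ext u
  simp [stageGraph_succ_adj hk, hw, ne_comm]

lemma two_le_degree_stageGraph (h3 : ∀ i, #(F i) = 3) (hw : w ∈ stageVerts F k) :
    2 ≤ (stageGraph F k).degree w := by
  obtain ⟨i, hi, hwi⟩ := mem_stageVerts.1 hw
  calc 2 = #((F i).erase w) := by rw [card_erase_of_mem hwi, h3]
    _ ≤ (stageGraph F k).degree w := by
      rw [← card_neighborFinset_eq_degree]
      refine card_le_card fun u hu => ?_
      rw [mem_erase] at hu
      exact (mem_neighborFinset ..).2 ⟨hu.1.symm, i, hi, hwi, hu.2⟩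

lemma IsExtension.neighborFinset_new (e : IsExtension F k a b x) :
    (stageGraph F (k + 1)).neighborFinset x = {a, b} := by
  rw [neighborFinset_stageGraph_succ_of_mem e.lt (by simp [e.eq]),
    neighborFinset_stageGraph_eq_empty e.new_notMem, empty_union, e.eq]
  rw [erase_insert_of_ne e.left_ne_new, erase_insert_of_ne e.right_ne_new, erase_singleton,
    insert_empty_eq]

lemma IsExtension.degree_new (e : IsExtension F k a b x) :
    (stageGraph F (k + 1)).degree x = 2 := by
  rw [← card_neighborFinset_eq_degree, e.neighborFinset_new, card_pair e.ne]

lemma IsExtension.degree_left (e : IsExtension F k a b x) (hab : (stageGraph F k).Adj a b) :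
    (stageGraph F (k + 1)).degree a = (stageGraph F k).degree a + 1 := by
  have hx : x ∉ (stageGraph F k).neighborFinset a :=
    fun h => e.new_notMem (neighborFinset_stageGraph_subset h)
  have hb : b ∈ (stageGraph F k).neighborFinset a := (mem_neighborFinset ..).2 hab
  rw [← card_neighborFinset_eq_degree, ← card_neighborFinset_eq_degree,
    neighborFinset_stageGraph_succ_of_mem e.lt (by simp [e.eq]), e.eq,
    erase_insert (by simp [e.ne, e.left_ne_new]), union_insert,
    insert_eq_of_mem (mem_union_left _ hb), union_comm, ← insert_eq, card_insert_of_notMem hx]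

lemma card_edgeFinset_sup_edge_add_two_le (hk : k < n) (hF : F ⟨k, hk⟩ = {a, b, x})
    (hab : a ≠ b) (hax : a ≠ x) (hbx : b ≠ x) (hx : x ∉ stageVerts F k) :
    #(stageGraph F k ⊔ edge a b).edgeFinset + 2 ≤ #(stageGraph F (k + 1)).edgeFinset := by
  have hxk : ∀ u, ¬ (stageGraph F k).Adj u x := fun u h => hx (mem_stageVerts_of_adj h.symm)
  have hax' : ¬ (stageGraph F k ⊔ edge a b).Adj a x := by simp [edge_adj, hxk, hbx.symm, hax, hab]
  have hbx' : ¬ (stageGraph F k ⊔ edge a b ⊔ edge a x).Adj b x := by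
    simp [edge_adj, hxk, hab.symm, hax.symm]
  have hle : stageGraph F k ⊔ edge a b ⊔ edge a x ⊔ edge b x ≤ stageGraph F (k + 1) := by
    have hadj : ∀ u ∈ F ⟨k, hk⟩, ∀ w ∈ F ⟨k, hk⟩, edge u w ≤ stageGraph F (k + 1) :=
      fun u hu w hw => (edge_le_iff _).2 <| or_iff_not_imp_left.2 fun hne =>
        (stageGraph_succ_adj hk).2 (Or.inr ⟨hne, hu, hw⟩)
    simp only [hF, mem_insert, mem_singleton] at hadj
    exact sup_le (sup_le (sup_le (stageGraph_mono k.le_succ) (hadj _ (by simp) _ (by simp)))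
      (hadj _ (by simp) _ (by simp))) (hadj _ (by simp) _ (by simp))
  have h1 : #(stageGraph F k ⊔ edge a b ⊔ edge a x).edgeFinset =
      #(stageGraph F k ⊔ edge a b).edgeFinset + 1 := by
    convert card_edgeFinset_sup_edge _ hax' hax
  have h2 : #(stageGraph F k ⊔ edge a b ⊔ edge a x ⊔ edge b x).edgeFinset =
      #(stageGraph F k ⊔ edge a b ⊔ edge a x).edgeFinset + 1 := by
    convert card_edgeFinset_sup_edge _ hbx' hbx
  have := card_le_card (edgeFinset_mono hle)
  omega

lemma IsExtension.card_edgeFinset_add_le (e : IsExtension F k a b x) :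
    #(stageGraph F k).edgeFinset + (if (stageGraph F k).Adj a b then 2 else 3) ≤
      #(stageGraph F (k + 1)).edgeFinset := by
  have := card_edgeFinset_sup_edge_add_two_le e.lt e.eq e.ne e.left_ne_new e.right_ne_new
    e.new_notMem
  split_ifs with hab
  · convert this using 4
    exact (sup_edge_of_adj _ hab).symm
  · have h : #(stageGraph F k ⊔ edge a b).edgeFinset = #(stageGraph F k).edgeFinset + 1 := by
      convert card_edgeFinset_sup_edge _ hab e.ne
    omega

lemma three_le_card_edgeFinset_stageGraph_one (hn : 0 < n) (h3 : #(F ⟨0, hn⟩) = 3) :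
    3 ≤ #(stageGraph F 1).edgeFinset := by
  obtain ⟨a, b, c, hab, hac, hbc, hF⟩ := card_eq_three.1 h3
  have hnadj : ¬ (stageGraph F 0).Adj a b := fun ⟨_, _, hi, _⟩ => Nat.not_lt_zero _ hi
  have h1 : #(stageGraph F 0 ⊔ edge a b).edgeFinset = #(stageGraph F 0).edgeFinset + 1 := by
    convert card_edgeFinset_sup_edge _ hnadj hab
  have h2 := card_edgeFinset_sup_edge_add_two_le (k := 0) hn hF hab hac hbc
    (by simp [mem_stageVerts])
  rw [zero_add] at h2
  omega

lemma _root_.IsBunch.card_edgeFinset_add_le (hB : IsBunch 3 F) {l : ℕ} (hk : 1 ≤ k)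
    (hkl : k ≤ l) (hl : l ≤ n) :
    #(stageGraph F k).edgeFinset + 2 * (l - k) ≤ #(stageGraph F l).edgeFinset := by
  induction l, hkl using Nat.le_induction with
  | base => simp
  | succ l hkl ih =>
    obtain ⟨a, b, x, e⟩ := hB.exists_isExtension (by omega) hl
    have := e.card_edgeFinset_add_le
    have := ih (by omega)
    split_ifs at * <;> omega

structure IsTightBunch (F : Fin n → Finset V) : Prop where
  isBunch : IsBunch 3 F
  adj : ∀ ⦃k a b x⦄, IsExtension F k a b x → (stageGraph F k).Adj a b

lemma _root_.IsBunch.isTightBunch (hB : IsBunch 3 F)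
    (hE : #(stageGraph F n).edgeFinset = 2 * n + 1) : IsTightBunch F := by
  refine ⟨hB, fun k a b x e => ?_⟩
  by_contra hab
  have hk := e.pos
  have h0 := three_le_card_edgeFinset_stageGraph_one (hk.trans e.lt) (hB.1 _)
  have h1 := e.card_edgeFinset_add_le
  have h2 := hB.card_edgeFinset_add_le le_rfl hk e.lt.le
  have h3 := hB.card_edgeFinset_add_le (k := k + 1) (by omega) e.lt le_rfl
  rw [if_neg hab] at h1
  omega

lemma degreeTwoSet_subset_stageVerts : degreeTwoSet F k ⊆ stageVerts F k := by
  intro w hw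
  by_contra hU
  rw [mem_degreeTwoSet, ← card_neighborFinset_eq_degree,
    neighborFinset_stageGraph_eq_empty hU] at hw
  simp at hw

lemma degreeTwoSet_one (hn : 0 < n) (h3 : #(F ⟨0, hn⟩) = 3) : degreeTwoSet F 1 = F ⟨0, hn⟩ := by
  ext w
  rw [mem_degreeTwoSet, ← card_neighborFinset_eq_degree]
  by_cases hw : w ∈ F ⟨0, hn⟩
  · rw [neighborFinset_stageGraph_succ_of_mem hn hw, neighborFinset_stageGraph_eq_empty
      (by simp [stageVerts_zero]), empty_union, card_erase_of_mem hw, h3]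
    simpa using hw
  · rw [neighborFinset_stageGraph_succ_of_notMem hn hw, neighborFinset_stageGraph_eq_empty
      (by simp [stageVerts_zero])]
    simpa using hw

lemma IsExtension.degreeTwoSet_succ (h3 : ∀ i, #(F i) = 3) (e : IsExtension F k a b x)
    (hab : (stageGraph F k).Adj a b) :
    degreeTwoSet F (k + 1) = insert x (degreeTwoSet F k \ {a, b}) := by
  have ha := two_le_degree_stageGraph h3 e.left_mem
  have hb := two_le_degree_stageGraph h3 e.right_mem
  ext w
  simp only [mem_insert, mem_sdiff, mem_degreeTwoSet, mem_insert, mem_singleton, not_or]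
  by_cases hwx : w = x
  · subst hwx
    simp [e.degree_new]
  by_cases hwa : w = a
  · subst hwa
    simp only [e.degree_left hab, hwx, not_true_eq_false, false_and, and_false, or_false,
      iff_false]
    omega
  by_cases hwb : w = b
  · subst hwb
    simp only [e.swap.degree_left hab.symm, hwx, not_true_eq_false, and_false, or_false,
      iff_false]
    omega
  rw [degree_stageGraph_succ_of_notMem e.lt (by simp [e.eq, hwa, hwb, hwx])]
  simp [hwx, hwa, hwb]

lemma IsExtension.three_le_degree_succ (h3 : ∀ i, #(F i) = 3) (e : IsExtension F k a b x)
    (hab : (stageGraph F k).Adj a b)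
    (hold : ∀ u w, (stageGraph F k).Adj u w →
      3 ≤ (stageGraph F k).degree u ∨ 3 ≤ (stageGraph F k).degree w ∨ u ∈ ({a, b} : Finset V) ∨
        w ∈ ({a, b} : Finset V))
    (huw : (stageGraph F (k + 1)).Adj u w) :
    3 ≤ (stageGraph F (k + 1)).degree u ∨ 3 ≤ (stageGraph F (k + 1)).degree w := by
  have hglue : ∀ y ∈ ({a, b} : Finset V), 3 ≤ (stageGraph F (k + 1)).degree y := by
    simp only [mem_insert, mem_singleton, forall_eq_or_imp, forall_eq]
    have := two_le_degree_stageGraph h3 e.left_mem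
    have := two_le_degree_stageGraph h3 e.right_mem
    rw [e.degree_left hab, e.swap.degree_left hab.symm]
    omega
  have hmono := fun y => degree_stageGraph_mono (F := F) (w := y) k.le_succ
  rcases (stageGraph_succ_adj e.lt).1 huw with h | ⟨hne, hu, hw⟩
  · rcases hold u w h with h | h | h | h
    · exact Or.inl (h.trans (hmono u))
    · exact Or.inr (h.trans (hmono w))
    · exact Or.inl (hglue u h)
    · exact Or.inr (hglue w h)
  · rw [e.eq] at hu hw
    by_cases hux : u = x
    · subst hux
      refine Or.inr (hglue w ?_)
      simp only [mem_insert, mem_singleton] at hw ⊢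
      rcases hw with h | h | rfl
      exacts [Or.inl h, Or.inr h, absurd rfl hne]
    · exact Or.inl (hglue u (by simp_all))

lemma IsTightBunch.three_le_degree (hT : IsTightBunch F) (h2 : 2 ≤ k) (hk : k ≤ n)
    (huw : (stageGraph F k).Adj u w) :
    3 ≤ (stageGraph F k).degree u ∨ 3 ≤ (stageGraph F k).degree w := by
  induction k, h2 using Nat.le_induction generalizing u w with
  | base =>
    obtain ⟨a, b, x, e⟩ := hT.isBunch.exists_isExtension Nat.one_pos hk
    refine e.three_le_degree_succ hT.isBunch.1 (hT.adj e) (fun u w h => ?_) huw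
    obtain ⟨hne, i, hi, hu, hw⟩ := h
    have hmem : ∀ y ∈ stageVerts F 1, y ∈ F i := fun y hy => by
      obtain ⟨j, hj, hy⟩ := mem_stageVerts.1 hy
      rwa [(Fin.ext (by omega) : j = i)] at hy
    obtain ⟨c, -, -, hF⟩ := exists_third_of_card_eq_three (hT.isBunch.1 i) (hmem a e.left_mem)
      (hmem b e.right_mem) e.ne
    rw [hF] at hu hw
    simp only [mem_insert, mem_singleton] at hu hw ⊢
    right; right
    rcases hu with rfl | rfl | rfl <;> rcases hw with rfl | rfl | rfl <;> simp_all
  | succ k h2 ih =>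
    obtain ⟨a, b, x, e⟩ := hT.isBunch.exists_isExtension (by omega) hk
    exact e.three_le_degree_succ hT.isBunch.1 (hT.adj e)
      (fun u w h => (ih (by omega) h).imp id Or.inl) huw

lemma IsTightBunch.card_degreeTwoSet_two (hT : IsTightBunch F) (hn : 2 ≤ n) :
    #(degreeTwoSet F 2) = 2 := by
  obtain ⟨a, b, x, e⟩ := hT.isBunch.exists_isExtension Nat.one_pos hn
  have hU : stageVerts F 1 = F ⟨0, by omega⟩ := stageVerts_one _
  have hsub : ({a, b} : Finset V) ⊆ F ⟨0, by omega⟩ := by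
    simp [insert_subset_iff, ← hU, e.left_mem, e.right_mem]
  rw [e.degreeTwoSet_succ hT.isBunch.1 (hT.adj e), degreeTwoSet_one (by omega) (hT.isBunch.1 _),
    card_insert_of_notMem (fun h => e.new_notMem (hU ▸ (mem_sdiff.1 h).1)),
    card_sdiff_of_subset hsub, hT.isBunch.1, card_pair e.ne]

lemma IsTightBunch.card_degreeTwoSet_le_succ (hT : IsTightBunch F) (h2 : 2 ≤ k) (hk : k < n) :
    #(degreeTwoSet F k) ≤ #(degreeTwoSet F (k + 1)) := by
  obtain ⟨a, b, x, e⟩ := hT.isBunch.exists_isExtension (by omega) hk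
  have hinter : #(degreeTwoSet F k ∩ {a, b}) ≤ 1 := by
    by_contra! h
    have hpair : degreeTwoSet F k ∩ {a, b} = {a, b} :=
      eq_of_subset_of_card_le inter_subset_right (by rw [card_pair e.ne]; omega)
    have ha : a ∈ degreeTwoSet F k := mem_of_mem_inter_left (hpair ▸ mem_insert_self a {b})
    have hb : b ∈ degreeTwoSet F k :=
      mem_of_mem_inter_left (hpair ▸ mem_insert_of_mem (mem_singleton_self b))
    rw [mem_degreeTwoSet] at ha hb
    have := hT.three_le_degree h2 hk.le (hT.adj e)
    omega
  have := card_sdiff_add_card_inter (degreeTwoSet F k) {a, b}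
  rw [e.degreeTwoSet_succ hT.isBunch.1 (hT.adj e), card_insert_of_notMem
    (fun h => e.new_notMem (degreeTwoSet_subset_stageVerts (mem_sdiff.1 h).1))]
  omega

lemma IsTightBunch.card_degreeTwoSet_eq_two (hT : IsTightBunch F)
    (hn : #(degreeTwoSet F n) ≤ 2) (h2 : 2 ≤ k) (hk : k ≤ n) : #(degreeTwoSet F k) = 2 := by
  have hmono : ∀ {l m}, 2 ≤ l → l ≤ m → m ≤ n → #(degreeTwoSet F l) ≤ #(degreeTwoSet F m) := by
    intro l m hl hlm hm
    induction m, hlm using Nat.le_induction with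
    | base => rfl
    | succ m hlm ih => exact (ih (by omega)).trans (hT.card_degreeTwoSet_le_succ (by omega) hm)
  have := hmono le_rfl h2 hk
  have := hmono h2 hk le_rfl
  have := hT.card_degreeTwoSet_two (h2.trans hk)
  omega

lemma IsTightBunch.left_mem_degreeTwoSet {s : V} (hT : IsTightBunch F)
    (hn : #(degreeTwoSet F n) ≤ 2) (e : IsExtension F k a b x)
    (hs : degreeTwoSet F k \ {a, b} = {s}) (hbs : (stageGraph F k).Adj b s) :
    a ∈ degreeTwoSet F k := by
  obtain ⟨hsS, hsab⟩ := mem_sdiff.1 (hs ▸ mem_singleton_self s : s ∈ degreeTwoSet F k \ {a, b})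
  obtain rfl | hk2 := eq_or_lt_of_le (Nat.one_le_iff_ne_zero.2 e.pos.ne')
  · rw [degreeTwoSet_one (e.pos.trans e.lt) (hT.isBunch.1 _), ← stageVerts_one (F := F)]
    exact e.left_mem
  have hb : b ∉ degreeTwoSet F k := fun hb => by
    have := hT.three_le_degree hk2 e.lt.le hbs
    rw [mem_degreeTwoSet] at hb hsS
    omega
  by_contra ha
  have hsub : degreeTwoSet F k ⊆ {s} := fun y hy => hs ▸ mem_sdiff.2
    ⟨hy, by simp only [mem_insert, mem_singleton, not_or]; exact ⟨by rintro rfl; exact ha hy,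
      by rintro rfl; exact hb hy⟩⟩
  have := card_le_card hsub
  rw [hT.card_degreeTwoSet_eq_two hn hk2 e.lt.le, card_singleton] at this
  omega

lemma IsTightBunch.isFan_succ {s : V} (hT : IsTightBunch F) (hn : #(degreeTwoSet F n) ≤ 2)
    (e : IsExtension F k a b x) (hs : degreeTwoSet F k \ {a, b} = {s})
    (hbs : (stageGraph F (k + 1)).Adj b s)
    (ih : ∀ {w p q : V}, p ≠ q → p ∈ degreeTwoSet F k → q ∈ degreeTwoSet F k →
      (stageGraph F k).Adj w p → (stageGraph F k).Adj w q → IsFan F k w p q) :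
    IsFan F (k + 1) b x s := by
  obtain ⟨hsS, hsab⟩ := mem_sdiff.1 (hs ▸ mem_singleton_self s : s ∈ degreeTwoSet F k \ {a, b})
  have hsF : s ∉ F ⟨k, e.lt⟩ := by
    have hsx : s ≠ x := fun h => e.new_notMem (h ▸ degreeTwoSet_subset_stageVerts hsS)
    simp only [mem_insert, mem_singleton, not_or] at hsab
    simp [e.eq, hsab.1, hsab.2, hsx]
  have hbs' : (stageGraph F k).Adj b s :=
    ((stageGraph_succ_adj e.lt).1 hbs).resolve_right fun h => hsF h.2.2
  have ha := hT.left_mem_degreeTwoSet hn e hs hbs'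
  exact e.isFan_succ (ih (fun h => hsab (h ▸ mem_insert_self a {b})) ha hsS (hT.adj e).symm hbs')

lemma IsTightBunch.isFan {p q : V} (hT : IsTightBunch F) (hn : #(degreeTwoSet F n) ≤ 2)
    (h1 : 1 ≤ k) (hk : k ≤ n) (hpq : p ≠ q) (hp : p ∈ degreeTwoSet F k)
    (hq : q ∈ degreeTwoSet F k) (hwp : (stageGraph F k).Adj w p)
    (hwq : (stageGraph F k).Adj w q) : IsFan F k w p q := by
  induction k, h1 using Nat.le_induction generalizing w p q with
  | base =>
    rw [degreeTwoSet_one (by omega) (hT.isBunch.1 _)] at hp hq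
    exact isFan_one _ (hT.isBunch.1 _) hpq hp hq hwp hwq
  | succ k h1 ih =>
    obtain ⟨a, b, x, e⟩ := hT.isBunch.exists_isExtension (by omega) hk
    have hstep := e.degreeTwoSet_succ hT.isBunch.1 (hT.adj e)
    obtain ⟨s, hs⟩ : ∃ s, degreeTwoSet F k \ {a, b} = {s} := by
      have := hT.card_degreeTwoSet_eq_two hn (by omega) hk
      rw [hstep, card_insert_of_notMem fun h =>
        e.new_notMem (degreeTwoSet_subset_stageVerts (mem_sdiff.1 h).1)] at this
      exact card_eq_one.1 (by omega)
    have key : ∀ {w}, (stageGraph F (k + 1)).Adj w x → (stageGraph F (k + 1)).Adj w s →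
        IsFan F (k + 1) w x s := by
      intro w hwx hws
      have hw : w ∈ ({a, b} : Finset V) := e.neighborFinset_new ▸ (mem_neighborFinset ..).2 hwx.symm
      rcases mem_insert.1 hw with rfl | hw
      · exact hT.isFan_succ hn e.swap (by rwa [pair_comm]) hws (ih (by omega))
      · rw [mem_singleton.1 hw]
        exact hT.isFan_succ hn e hs (mem_singleton.1 hw ▸ hws) (ih (by omega))
    rw [hstep, hs] at hp hq
    simp only [mem_insert, mem_singleton] at hp hq
    rcases hp with rfl | rfl <;> rcases hq with rfl | rfl
    · exact absurd rfl hpq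
    · exact key hwp hwq
    · exact (key hwq hwp).symm
    · exact absurd rfl hpq

lemma degreeTwoSet_subset_of_eq_sup_edge {G : SimpleGraph V} {X Y : V}
    (hG : G = stageGraph F k ⊔ edge X Y) (hdeg : ∀ w, 3 ≤ G.degree w) :
    degreeTwoSet F k ⊆ {X, Y} := by
  intro w hw
  by_contra h
  simp only [mem_insert, mem_singleton, not_or] at h
  have hnbr : G.neighborFinset w = (stageGraph F k).neighborFinset w := by
    ext u
    simp [hG, edge_adj, h.1, h.2]
  have := hdeg w
  rw [← card_neighborFinset_eq_degree, hnbr, card_neighborFinset_eq_degree,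
    mem_degreeTwoSet.1 hw] at this
  omega

end Degree

end TriangleBunch

open TriangleBunch

theorem stmt19_general {V : Type} [Fintype V] [DecidableEq V] (v m : ℕ) (hv : 5 ≤ v)
    (hcardV : Fintype.card V = v)
    (T : Fin m → Finset V) (hT3 : ∀ j, (T j).card = 3)
    (hdeg : ∀ x : V, 3 ≤ ((cliquesGraph T).neighborFinset x).card)
    (hedges : (cliquesGraph T).edgeFinset.card = 2 * v - 2)
    (F : Fin (v - 2) → Finset V) (hB : IsBunch 3 F) (hFT : ∀ i, ∃ j, F i = T j)
    (hspanF : Finset.univ.biUnion F = Finset.univ)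
    (hBedges : (cliquesGraph F).edgeFinset.card = 2 * v - 3) :
    Nonempty (cliquesGraph T ≃g wheel (v - 1)) := by
  have hBA : stageGraph F (v - 2) ≤ cliquesGraph T :=
    cliquesGraph_eq_stageGraph (F := F) ▸ cliquesGraph_le_of_forall_exists hFT
  rw [cliquesGraph_eq_stageGraph] at hBedges
  obtain ⟨X, Y, hXY, hA⟩ := exists_eq_sup_edge_of_le hBA (by omega)
  have hT := hB.isTightBunch (by omega)
  have hends := degreeTwoSet_subset_of_eq_sup_edge hA hdeg
  have hcard : #(degreeTwoSet F (v - 2)) ≤ 2 := (card_le_card hends).trans card_le_two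
  have hXYends : degreeTwoSet F (v - 2) = {X, Y} := eq_of_subset_of_card_le hends
    (by rw [card_pair hXY, hT.card_degreeTwoSet_eq_two hcard (by omega) le_rfl])
  obtain ⟨z, hzX, hzY⟩ := exists_adj_adj_of_cliquesGraph_eq_sup_edge hT3 hA hXY
  obtain ⟨hz, P, hP, hsupp⟩ := hT.isFan hcard (by omega) le_rfl hXY
    (by simp [hXYends]) (by simp [hXYends]) hzX hzY
  rw [stageVerts_self hspanF] at hsupp
  have hhub : ∀ w, w ≠ z → (cliquesGraph T).Adj z w := fun w hw =>
    hBA (stageGraph_adj_of_forall_mem hz (by simp [stageVerts_self hspanF]) hw.symm)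
  have hYX : (cliquesGraph T).Adj Y X :=
    hA ▸ Or.inr ((edge_adj ..).2 ⟨Or.inr ⟨rfl, rfl⟩, hXY.symm⟩)
  have hlen : P.length + 1 = v - 1 := by
    rw [← Walk.length_support, ← List.toFinset_card_of_nodup hP.support_nodup, hsupp,
      card_erase_of_mem (mem_univ z), card_univ, hcardV]
  rw [← hlen, ← Walk.length_mapLe hBA]
  exact nonempty_iso_wheel_of_isPath (hP.mapLe hBA) (by rwa [Walk.support_mapLe_eq_support])
    hYX hhub (degree_eq_three_of_forall_adj hhub hdeg (by omega))
    (by rw [Walk.length_mapLe]; omega)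

/-- A connected triangle collection `A` on `v ≥ 5` vertices with minimum degree at
least `3` and `2v-2` edges, containing a spanning `(v-2)`-bunch of its triangles with
`2v-3` edges, is the wheel `W_{v-1}`. -/
theorem stmt19 {V : Type} [Fintype V] [DecidableEq V] (v m : ℕ) (hv : 5 ≤ v)
    (hcardV : Fintype.card V = v)
    (T : Fin m → Finset V) (hT3 : ∀ j, (T j).card = 3)
    (hspanT : Finset.univ.biUnion T = Finset.univ)
    (hconn : (auxGraph T).Connected)
    (hdeg : ∀ x : V, 3 ≤ ((cliquesGraph T).neighborFinset x).card)
    (hedges : (cliquesGraph T).edgeFinset.card = 2 * v - 2)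
    (F : Fin (v - 2) → Finset V) (hB : IsBunch 3 F) (hFT : ∀ i, ∃ j, F i = T j)
    (hspanF : Finset.univ.biUnion F = Finset.univ)
    (hBedges : (cliquesGraph F).edgeFinset.card = 2 * v - 3) :
    Nonempty (cliquesGraph T ≃g wheel (v - 1)) :=
  stmt19_general v m hv hcardV T hT3 hdeg hedges F hB hFT hspanF hBedges
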